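/- Let N ≥ 2, p > 1, γ ∈ ℝ with γ < 3 + (p−1)/(N−1), and s ∈ [0,1]. Define H(s-form) := (p−2)(2−γ+(p−2)/(N−1))·s² + (p−γ+2(p−2)/(N−1))·s + N/(N−1). Then H ≥ (p−1)(3 + (p−1)/(N−1) − γ)·s² + (N/(N−1))·(1−s)², and hence H > 0. -/
import Mathlib


theorem H_lower_bound (N p γ s : ℝ) (hN : 2 ≤ N) (hp : 1 < p)
    (hγ : γ < 3 + (p - 1) / (N - 1)) (hs0 : 0 ≤ s) (hs1 : s ≤ 1) :
    (p - 2) * (2 - γ + (p - 2) / (N - 1)) * s ^ 2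
        + (p - γ + 2 * (p - 2) / (N - 1)) * s + N / (N - 1)
      ≥ (p - 1) * (3 + (p - 1) / (N - 1) - γ) * s ^ 2 + (N / (N - 1)) * (1 - s) ^ 2 ∧
    0 < (p - 2) * (2 - γ + (p - 2) / (N - 1)) * s ^ 2
        + (p - γ + 2 * (p - 2) / (N - 1)) * s + N / (N - 1) := by
  have hd : (0:ℝ) < N - 1 := by linarith
  have hγ' : (γ - 3) * (N - 1) < p - 1 := (lt_div_iff₀ hd).mp (by linarith)
  have hβmul : 0 < (p - γ) * (N - 1) + 2 * (p - 2) + 2 * N := by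
    nlinarith [mul_pos (show (0:ℝ) < p - 1 by linarith) (show (0:ℝ) < N by linarith)]
  have hβ : 0 < p - γ + 2 * (p - 2) / (N - 1) + 2 * N / (N - 1) := by
    have h2 : p - γ + 2 * (p - 2) / (N - 1) + 2 * N / (N - 1)
        = ((p - γ) * (N - 1) + 2 * (p - 2) + 2 * N) / (N - 1) := by
      field_simp
    rw [h2]
    exact div_pos hβmul hd
  have hA : 0 < (p - 1) * (3 + (p - 1) / (N - 1) - γ) :=
    mul_pos (by linarith) (by linarith)
  have hN' : 0 < N / (N - 1) := div_pos (by linarith) hd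
  have hdiff : (p - 2) * (2 - γ + (p - 2) / (N - 1)) * s ^ 2
        + (p - γ + 2 * (p - 2) / (N - 1)) * s + N / (N - 1)
        - ((p - 1) * (3 + (p - 1) / (N - 1) - γ) * s ^ 2 + (N / (N - 1)) * (1 - s) ^ 2)
      = s * (1 - s) * (p - γ + 2 * (p - 2) / (N - 1) + 2 * N / (N - 1)) := by
    field_simp
    ring
  have h3 : 0 ≤ s * (1 - s) * (p - γ + 2 * (p - 2) / (N - 1) + 2 * N / (N - 1)) :=
    mul_nonneg (mul_nonneg hs0 (by linarith)) hβ.le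
  constructor
  · linarith
  · have hpos : 0 < (p - 1) * (3 + (p - 1) / (N - 1) - γ) * s ^ 2
        + (N / (N - 1)) * (1 - s) ^ 2 := by
      rcases le_or_gt (1/2 : ℝ) s with h | h
      · nlinarith [mul_pos hA (show (0:ℝ) < s ^ 2 by nlinarith),
          mul_nonneg hN'.le (sq_nonneg (1 - s))]
      · nlinarith [mul_pos hN' (show (0:ℝ) < (1 - s) ^ 2 by nlinarith),
          mul_nonneg hA.le (sq_nonneg s)]
    linarith
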